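/- The 0-th horizontal cohomology of the divergence-free jet space is ℝ: if f ∈ A(bCE) is a finite-order smooth function on bCE with D_μ f = 0 for every μ ∈ M, then f is a constant function. -/

import Mathlib

/-!
The divergence-free jet space `bCE = ℝ^m × ℝ^{I₀} × (ℝ^N)^I × ℝ^I`
(global coordinates on the solution manifold of the continuity equation),
with `I = ℕ^m`, `I₀ = {i : i¹ = 0}`, `N = {2,…,m}`.
-/

/-- Multi-indices `I = ℕ^m`. -/
abbrev MIdx (m : ℕ) := Fin m → ℕ

/-- The coordinates on `bCE`: `x^μ` (`μ ∈ M`), `u¹_i` (`i ∈ I₀`),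
`u^α_i` (`α ∈ N`, `i ∈ I`) and `p_i` (`i ∈ I`). -/
inductive CE (m : ℕ) [NeZero m] where
  | x : Fin m → CE m
  | u1 : {i : MIdx m // i 0 = 0} → CE m
  | uN : {α : Fin m // α ≠ 0} → MIdx m → CE m
  | p : MIdx m → CE m
deriving DecidableEq

/-- The divergence-free jet space `bCE`. -/
abbrev BCE (m : ℕ) [NeZero m] := CE m → ℝ

/-- Partial derivative of `f : (C → ℝ) → ℝ` along the coordinate `c`. -/
noncomputable def pd {C : Type*} [DecidableEq C] (c : C) (f : (C → ℝ) → ℝ)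
    (z : C → ℝ) : ℝ :=
  deriv (fun t : ℝ => f (Function.update z c t)) (z c)

/-- A function `f : (C → ℝ) → ℝ` is a finite-order smooth function if it factors
as a smooth function of finitely many of the coordinates. -/
def FinOrd {C : Type*} (f : (C → ℝ) → ℝ) : Prop :=
  ∃ (s : Finset C) (g : ({c // c ∈ s} → ℝ) → ℝ),
    ContDiff ℝ (⊤ : ℕ∞) g ∧ ∀ z : C → ℝ, f z = g fun c => z c.1

/-- The extension of `u¹` to all multi-indices `i ∈ I`: for `i ∈ I₀` it is the
coordinate `u¹_i`, and `u¹_{j+e₁} := -Σ_{α∈N} u^α_{j+e_α}` otherwise. -/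
noncomputable def u1fun {m : ℕ} [NeZero m] (i : MIdx m) : BCE m → ℝ :=
  if h : i 0 = 0 then fun z => z (CE.u1 ⟨i, h⟩)
  else fun z => -∑ α : {α : Fin m // α ≠ 0},
    z (CE.uN α (Function.update i 0 (i 0 - 1) + Pi.single (α : Fin m) 1))

/-- The coordinate function `u^μ_i` on `bCE`, where for `μ = 1` the substituted
function `u1fun` is used. -/
noncomputable def uAll {m : ℕ} [NeZero m] (μ : Fin m) (i : MIdx m) : BCE m → ℝ :=
  if h : μ = 0 then u1fun i else fun z => z (CE.uN ⟨μ, h⟩ i)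

/-- The total derivative `D_μ` on the divergence-free jet space `bCE`. -/
noncomputable def Dce {m : ℕ} [NeZero m] (μ : Fin m) (f : BCE m → ℝ) : BCE m → ℝ :=
  fun z =>
    pd (CE.x μ) f z
      + ∑ᶠ i : {i : MIdx m // i 0 = 0},
          u1fun (i.1 + Pi.single μ 1) z * pd (CE.u1 i) f z
      + ∑ᶠ (α : {α : Fin m // α ≠ 0}) (i : MIdx m),
          z (CE.uN α (i + Pi.single μ 1)) * pd (CE.uN α i) f z
      + ∑ᶠ i : MIdx m, z (CE.p (i + Pi.single μ 1)) * pd (CE.p i) f z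

namespace S9

variable {C : Type*} [DecidableEq C] (s : Finset C) (g : ({c // c ∈ s} → ℝ) → ℝ)

def res (z : C → ℝ) : {c // c ∈ s} → ℝ := fun c => z c.1

noncomputable def dres (c : C) : {c // c ∈ s} → ℝ := fun d => if (d : C) = c then 1 else 0

lemma res_update (z : C → ℝ) (c : C) (t : ℝ) :
    res s (Function.update z c t) = res s z + (t - z c) • dres s c := by
  funext d
  simp only [res, dres, Function.update_apply, Pi.add_apply, Pi.smul_apply, smul_eq_mul]
  by_cases h : (d : C) = c
  · rw [if_pos h, if_pos h, h]; ring
  · rw [if_neg h, if_neg h]; ring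

variable (f : (C → ℝ) → ℝ) (hg : ContDiff ℝ (⊤ : ℕ∞) g) (hfg : ∀ z, f z = g (res s z))

lemma hasDerivAt_line (c : C) (z : C → ℝ) (t₀ : ℝ) :
    HasDerivAt (fun t : ℝ => res s z + (t - z c) • dres s c) (dres s c) t₀ := by
  have h := (((hasDerivAt_id t₀).sub_const (z c)).smul_const (dres s c)).const_add (res s z)
  simpa using h

include hg hfg in
lemma hasDerivAt_f (c : C) (z : C → ℝ) :
    HasDerivAt (fun t => f (Function.update z c t))
      (fderiv ℝ g (res s z) (dres s c)) (z c) := by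
  have h2 := hasDerivAt_line s c z (z c)
  have h3 := ((hg.differentiable (by simp)) (res s z + ((z c) - z c) • dres s c)).hasFDerivAt.comp_hasDerivAt (z c) h2
  have h4 : (fun t => f (Function.update z c t)) =
      (fun t => g (res s z + (t - z c) • dres s c)) := by
    funext t; rw [hfg, res_update]
  rw [h4]
  simpa [Function.comp_def] using h3

include hg hfg in
lemma pd_eq (c : C) (z : C → ℝ) :
    pd c f z = fderiv ℝ g (res s z) (dres s c) :=
  (hasDerivAt_f s g f hg hfg c z).deriv

include hg hfg in
lemma pd_eq_zero (c : C) (hc : c ∉ s) (z : C → ℝ) : pd c f z = 0 := by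
  rw [pd_eq s g f hg hfg c z]
  have : dres s c = 0 := by
    funext d
    simp only [dres, Pi.zero_apply, ite_eq_right_iff]
    intro h; exact absurd (h ▸ d.2) hc
  rw [this, map_zero]

/-- second-order coefficient -/
noncomputable def Hm (d c : C) (z : C → ℝ) : ℝ :=
  fderiv ℝ (fderiv ℝ g) (res s z) (dres s c) (dres s d)

include hg hfg in
lemma hasDerivAt_pd (d c : C) (z : C → ℝ) :
    HasDerivAt (fun t => pd d f (Function.update z c t)) (Hm s g d c z) (z c) := by
  have hg' : ContDiff ℝ (⊤ : ℕ∞) (fderiv ℝ g) := hg.fderiv_right (le_of_eq (by simp))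
  have hF' : HasFDerivAt (fderiv ℝ g) (fderiv ℝ (fderiv ℝ g) (res s z)) (res s z) :=
    ((hg'.differentiable (by simp)) (res s z)).hasFDerivAt
  have hΦ : HasFDerivAt (fun w => fderiv ℝ g w (dres s d))
      ((ContinuousLinearMap.apply ℝ ℝ (dres s d)).comp (fderiv ℝ (fderiv ℝ g) (res s z)))
      (res s z + ((z c) - z c) • dres s c) := by
    have : res s z + ((z c) - z c) • dres s c = res s z := by simp
    rw [this]
    exact ((ContinuousLinearMap.apply ℝ ℝ (dres s d)).hasFDerivAt).comp (res s z) hF'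
  have h2 := hΦ.comp_hasDerivAt (z c) (hasDerivAt_line s c z (z c))
  have h4 : (fun t => pd d f (Function.update z c t)) =
      (fun t => fderiv ℝ g (res s z + (t - z c) • dres s c) (dres s d)) := by
    funext t
    rw [pd_eq s g f hg hfg d (Function.update z c t), res_update]
  rw [h4, Hm]
  simpa [Function.comp_def] using h2

include hg in
lemma Hm_symm (d c : C) (z : C → ℝ) : Hm s g d c z = Hm s g c d z := by
  have hg' : ContDiff ℝ (⊤ : ℕ∞) (fderiv ℝ g) := hg.fderiv_right (le_of_eq (by simp))
  have hF' : HasFDerivAt (fderiv ℝ g) (fderiv ℝ (fderiv ℝ g) (res s z)) (res s z) :=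
    ((hg'.differentiable (by simp)) (res s z)).hasFDerivAt
  exact second_derivative_symmetric (fun y => ((hg.differentiable (by simp)) y).hasFDerivAt)
    hF' (dres s c) (dres s d)

include hg hfg in
lemma Hm_eq_zero (d c : C) (hc : ∀ z, pd c f z = 0) (z : C → ℝ) : Hm s g d c z = 0 := by
  rw [Hm_symm s g hg d c z]
  have h1 := hasDerivAt_pd s g f hg hfg c d z
  have h2 : (fun t => pd c f (Function.update z d t)) = (fun _ : ℝ => (0 : ℝ)) :=
    funext fun t => hc _
  rw [h2] at h1
  exact h1.unique (hasDerivAt_const _ 0)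

end S9

namespace S9

variable {m : ℕ} [NeZero m]

lemma u1_injective : Function.Injective (CE.u1 (m := m)) := fun a b h => by
  simpa using h

lemma uN_injective (α : {α : Fin m // α ≠ 0}) :
    Function.Injective (CE.uN (m := m) α) := fun a b h => by simpa using h

lemma p_injective : Function.Injective (CE.p (m := m)) := fun a b h => by
  simpa using h

variable (s : Finset (CE m))

noncomputable def T1 : Finset {i : MIdx m // i 0 = 0} :=
  (Set.Finite.preimage (u1_injective.injOn) s.finite_toSet).toFinset

noncomputable def T2 (α : {α : Fin m // α ≠ 0}) : Finset (MIdx m) :=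
  (Set.Finite.preimage ((uN_injective α).injOn) s.finite_toSet).toFinset

noncomputable def T3 : Finset (MIdx m) :=
  (Set.Finite.preimage (p_injective.injOn) s.finite_toSet).toFinset

lemma mem_T1 {i} : i ∈ T1 s ↔ CE.u1 i ∈ s := by simp [T1]
lemma mem_T2 {α i} : i ∈ T2 s α ↔ CE.uN α i ∈ s := by simp [T2]
lemma mem_T3 {i} : i ∈ T3 s ↔ CE.p i ∈ s := by simp [T3]

noncomputable def dl (d c : CE m) : ℝ := if d = c then 1 else 0

lemma hasDerivAt_coord (z : BCE m) (c d : CE m) :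
    HasDerivAt (fun t => Function.update z c t d) (dl d c) (z c) := by
  by_cases h : d = c
  · subst h
    have h2 : (fun t => Function.update z d t d) = fun t => t := by
      funext t; simp
    rw [h2, dl, if_pos rfl]
    exact hasDerivAt_id _
  · have h2 : (fun t => Function.update z c t d) = fun _ => z d := by
      funext t; simp [Function.update_apply, h]
    rw [h2, dl, if_neg h]
    exact hasDerivAt_const _ _

noncomputable def du1 (j : MIdx m) (c : CE m) : ℝ :=
  if h : j 0 = 0 then dl (CE.u1 ⟨j, h⟩) c
  else -∑ α : {α : Fin m // α ≠ 0},
    dl (CE.uN α (Function.update j 0 (j 0 - 1) + Pi.single (α : Fin m) 1)) c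

lemma hasDerivAt_u1fun (z : BCE m) (c : CE m) (j : MIdx m) :
    HasDerivAt (fun t => u1fun j (Function.update z c t)) (du1 j c) (z c) := by
  by_cases h : j 0 = 0
  · simp only [u1fun, du1, dif_pos h]
    exact hasDerivAt_coord z c _
  · simp only [u1fun, du1, dif_neg h]
    exact (HasDerivAt.fun_sum fun α _ => hasDerivAt_coord z c _).neg

variable (g : ({c // c ∈ s} → ℝ) → ℝ) (f : BCE m → ℝ)

variable (hg : ContDiff ℝ (⊤ : ℕ∞) g) (hfg : ∀ z, f z = g (res s z))

include hg hfg in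
lemma Dsum (μ : Fin m) (z : BCE m) :
    Dce μ f z =
      pd (CE.x μ) f z
        + ∑ i ∈ T1 s, u1fun (i.1 + Pi.single μ 1) z * pd (CE.u1 i) f z
        + ∑ α : {α : Fin m // α ≠ 0}, ∑ i ∈ T2 s α,
            z (CE.uN α (i + Pi.single μ 1)) * pd (CE.uN α i) f z
        + ∑ i ∈ T3 s, z (CE.p (i + Pi.single μ 1)) * pd (CE.p i) f z := by
  have key : ∀ (c : CE m) (z : BCE m), c ∉ s → pd c f z = 0 :=
    fun c z hc => pd_eq_zero s g f hg hfg c hc z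
  have e1 : (∑ᶠ i : {i : MIdx m // i 0 = 0},
      u1fun (i.1 + Pi.single μ 1) z * pd (CE.u1 i) f z)
      = ∑ i ∈ T1 s, u1fun (i.1 + Pi.single μ 1) z * pd (CE.u1 i) f z := by
    refine finsum_eq_sum_of_support_subset _ fun i hi => ?_
    simp only [Function.mem_support] at hi
    simp only [Finset.mem_coe, mem_T1]
    by_contra hmem
    exact hi (by rw [key _ _ hmem, mul_zero])
  have e2 : (∑ᶠ (α : {α : Fin m // α ≠ 0}) (i : MIdx m),
      z (CE.uN α (i + Pi.single μ 1)) * pd (CE.uN α i) f z)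
      = ∑ α : {α : Fin m // α ≠ 0}, ∑ i ∈ T2 s α,
          z (CE.uN α (i + Pi.single μ 1)) * pd (CE.uN α i) f z := by
    rw [finsum_eq_sum_of_fintype]
    refine Finset.sum_congr rfl fun α _ => ?_
    refine finsum_eq_sum_of_support_subset _ fun i hi => ?_
    simp only [Function.mem_support] at hi
    simp only [Finset.mem_coe, mem_T2]
    by_contra hmem
    exact hi (by rw [key _ _ hmem, mul_zero])
  have e3 : (∑ᶠ i : MIdx m, z (CE.p (i + Pi.single μ 1)) * pd (CE.p i) f z)
      = ∑ i ∈ T3 s, z (CE.p (i + Pi.single μ 1)) * pd (CE.p i) f z := by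
    refine finsum_eq_sum_of_support_subset _ fun i hi => ?_
    simp only [Function.mem_support] at hi
    simp only [Finset.mem_coe, mem_T3]
    by_contra hmem
    exact hi (by rw [key _ _ hmem, mul_zero])
  rw [Dce, e1, e2, e3]

include hg hfg in
lemma EXPR_zero (hD : ∀ (μ : Fin m) (z : BCE m), Dce μ f z = 0)
    (μ : Fin m) (c : CE m) (z : BCE m) :
    Hm s g (CE.x μ) c z
      + (∑ i ∈ T1 s, (du1 (i.1 + Pi.single μ 1) c * pd (CE.u1 i) f z
          + u1fun (i.1 + Pi.single μ 1) z * Hm s g (CE.u1 i) c z))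
      + (∑ α : {α : Fin m // α ≠ 0}, ∑ i ∈ T2 s α,
          (dl (CE.uN α (i + Pi.single μ 1)) c * pd (CE.uN α i) f z
            + z (CE.uN α (i + Pi.single μ 1)) * Hm s g (CE.uN α i) c z))
      + (∑ i ∈ T3 s, (dl (CE.p (i + Pi.single μ 1)) c * pd (CE.p i) f z
          + z (CE.p (i + Pi.single μ 1)) * Hm s g (CE.p i) c z)) = 0 := by
  have hb : HasDerivAt (fun t =>
      pd (CE.x μ) f (Function.update z c t)
        + ∑ i ∈ T1 s, u1fun (i.1 + Pi.single μ 1) (Function.update z c t)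
            * pd (CE.u1 i) f (Function.update z c t)
        + ∑ α : {α : Fin m // α ≠ 0}, ∑ i ∈ T2 s α,
            Function.update z c t (CE.uN α (i + Pi.single μ 1))
              * pd (CE.uN α i) f (Function.update z c t)
        + ∑ i ∈ T3 s, Function.update z c t (CE.p (i + Pi.single μ 1))
            * pd (CE.p i) f (Function.update z c t))
      (Hm s g (CE.x μ) c z
        + (∑ i ∈ T1 s, (du1 (i.1 + Pi.single μ 1) c * pd (CE.u1 i) f z
            + u1fun (i.1 + Pi.single μ 1) z * Hm s g (CE.u1 i) c z))
        + (∑ α : {α : Fin m // α ≠ 0}, ∑ i ∈ T2 s α,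
            (dl (CE.uN α (i + Pi.single μ 1)) c * pd (CE.uN α i) f z
              + z (CE.uN α (i + Pi.single μ 1)) * Hm s g (CE.uN α i) c z))
        + (∑ i ∈ T3 s, (dl (CE.p (i + Pi.single μ 1)) c * pd (CE.p i) f z
            + z (CE.p (i + Pi.single μ 1)) * Hm s g (CE.p i) c z))) (z c) := by
    have h1 : HasDerivAt (fun t => pd (CE.x μ) f (Function.update z c t))
        (Hm s g (CE.x μ) c z) (z c) := hasDerivAt_pd s g f hg hfg (CE.x μ) c z
    have h2 : HasDerivAt (fun t => ∑ i ∈ T1 s,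
          u1fun (i.1 + Pi.single μ 1) (Function.update z c t)
            * pd (CE.u1 i) f (Function.update z c t))
        (∑ i ∈ T1 s, (du1 (i.1 + Pi.single μ 1) c * pd (CE.u1 i) f z
            + u1fun (i.1 + Pi.single μ 1) z * Hm s g (CE.u1 i) c z)) (z c) := by
      refine HasDerivAt.fun_sum fun i _ => ?_
      simpa [Function.update_eq_self] using
        (hasDerivAt_u1fun z c (i.1 + Pi.single μ 1)).fun_mul
          (hasDerivAt_pd s g f hg hfg (CE.u1 i) c z)
    have h3 : HasDerivAt (fun t => ∑ α : {α : Fin m // α ≠ 0}, ∑ i ∈ T2 s α,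
          Function.update z c t (CE.uN α (i + Pi.single μ 1))
            * pd (CE.uN α i) f (Function.update z c t))
        (∑ α : {α : Fin m // α ≠ 0}, ∑ i ∈ T2 s α,
          (dl (CE.uN α (i + Pi.single μ 1)) c * pd (CE.uN α i) f z
            + z (CE.uN α (i + Pi.single μ 1)) * Hm s g (CE.uN α i) c z)) (z c) := by
      refine HasDerivAt.fun_sum fun α _ => HasDerivAt.fun_sum fun i _ => ?_
      simpa [Function.update_eq_self] using
        (hasDerivAt_coord z c (CE.uN α (i + Pi.single μ 1))).fun_mul
          (hasDerivAt_pd s g f hg hfg (CE.uN α i) c z)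
    have h4 : HasDerivAt (fun t => ∑ i ∈ T3 s,
          Function.update z c t (CE.p (i + Pi.single μ 1))
            * pd (CE.p i) f (Function.update z c t))
        (∑ i ∈ T3 s, (dl (CE.p (i + Pi.single μ 1)) c * pd (CE.p i) f z
            + z (CE.p (i + Pi.single μ 1)) * Hm s g (CE.p i) c z)) (z c) := by
      refine HasDerivAt.fun_sum fun i _ => ?_
      simpa [Function.update_eq_self] using
        (hasDerivAt_coord z c (CE.p (i + Pi.single μ 1))).fun_mul
          (hasDerivAt_pd s g f hg hfg (CE.p i) c z)
    exact ((h1.add h2).add h3).add h4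
  have h0 : (fun t =>
      pd (CE.x μ) f (Function.update z c t)
        + ∑ i ∈ T1 s, u1fun (i.1 + Pi.single μ 1) (Function.update z c t)
            * pd (CE.u1 i) f (Function.update z c t)
        + ∑ α : {α : Fin m // α ≠ 0}, ∑ i ∈ T2 s α,
            Function.update z c t (CE.uN α (i + Pi.single μ 1))
              * pd (CE.uN α i) f (Function.update z c t)
        + ∑ i ∈ T3 s, Function.update z c t (CE.p (i + Pi.single μ 1))
            * pd (CE.p i) f (Function.update z c t)) = fun _ : ℝ => (0 : ℝ) := by
    funext t
    rw [← Dsum s g f hg hfg μ (Function.update z c t)]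
    exact hD μ _
  rw [h0] at hb
  exact hb.unique (hasDerivAt_const _ 0)

end S9

namespace S9

variable {m : ℕ} [NeZero m]

noncomputable def ordC : CE m → ℕ
  | .x _ => 0
  | .u1 i => ∑ ν : Fin m, i.1 ν
  | .uN _ i => ∑ ν : Fin m, i ν
  | .p i => ∑ ν : Fin m, i ν

def notX : CE m → Prop
  | .x _ => False
  | _ => True

lemma sum_add_single (i : MIdx m) (μ : Fin m) :
    (∑ ν : Fin m, (i + Pi.single μ 1 : MIdx m) ν) = (∑ ν : Fin m, i ν) + 1 := by
  simp [Finset.sum_add_distrib, Pi.single_apply, Finset.sum_ite_eq']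

end S9

/-- the 0-th horizontal cohomology of the divergence-free jet space
is `ℝ`: if `f ∈ A(bCE)` satisfies `D_μ f = 0` for every `μ ∈ M`, then `f` is
constant. -/
theorem statement9 (m : ℕ) [NeZero m] (hm : 2 ≤ m) (f : BCE m → ℝ) (hf : FinOrd f)
    (hD : ∀ (μ : Fin m) (z : BCE m), Dce μ f z = 0) :
    ∃ c : ℝ, ∀ z : BCE m, f z = c := by
  classical
  obtain ⟨s, g, hg, hfg⟩ := hf
  have hfg' : ∀ z, f z = g (S9.res s z) := hfg
  set K := s.sup S9.ordC with hK
  have hordK : ∀ c ∈ s, S9.ordC c ≤ K := fun c hc => Finset.le_sup hc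
  have key : ∀ (c : CE m) (z : BCE m), c ∉ s → pd c f z = 0 :=
    fun c z hc => S9.pd_eq_zero s g f hg hfg' c hc z
  have h1m : 1 < m := by omega
  obtain ⟨α0, -⟩ : ∃ α : {α : Fin m // α ≠ 0}, True :=
    ⟨⟨⟨1, h1m⟩, by simp [Fin.ext_iff]⟩, trivial⟩
  have h0α : ¬((0 : Fin m) = (α0.1 : Fin m)) := fun h => α0.2 h.symm
  have claim : ∀ d : ℕ, ∀ c : CE m, S9.notX c → K < S9.ordC c + d →
      ∀ z, pd c f z = 0 := by
    intro d
    induction d with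
    | zero =>
      intro c hcx hord z
      refine key c z fun hc => ?_
      have := hordK c hc; omega
    | succ d ih =>
      intro c hcx hord z
      by_cases hlt : K < S9.ordC c + d
      · exact ih c hcx hlt z
      cases c with
      | x μ => simp [S9.notX] at hcx
      | u1 i =>
        have hi0 : (i.1 + Pi.single (α0.1 : Fin m) 1 : MIdx m) 0 = 0 := by
          simp [i.2, Pi.single_apply, h0α]
        have hPdc : ∀ z', pd (CE.u1 ⟨i.1 + Pi.single (α0.1 : Fin m) 1, hi0⟩) f z' = 0 := by
          intro z'
          refine ih _ (by simp [S9.notX]) ?_ z'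
          have hss := S9.sum_add_single i.1 (α0.1 : Fin m)
          simp only [S9.ordC] at hord hlt ⊢
          omega
        have hmz : ∀ (d' : CE m) (z' : BCE m),
            S9.Hm s g d' (CE.u1 ⟨i.1 + Pi.single (α0.1 : Fin m) 1, hi0⟩) z' = 0 :=
          fun d' z' => S9.Hm_eq_zero s g f hg hfg' d' _ hPdc z'
        have hz := S9.EXPR_zero s g f hg hfg' hD α0.1
          (CE.u1 ⟨i.1 + Pi.single (α0.1 : Fin m) 1, hi0⟩) z
        have hdu : ∀ j : {i : MIdx m // i 0 = 0},
            S9.du1 (j.1 + Pi.single (α0.1 : Fin m) 1)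
              (CE.u1 ⟨i.1 + Pi.single (α0.1 : Fin m) 1, hi0⟩)
              = if j = i then (1 : ℝ) else 0 := by
          intro j
          have hj0 : (j.1 + Pi.single (α0.1 : Fin m) 1 : MIdx m) 0 = 0 := by
            simp [j.2, Pi.single_apply, h0α]
          simp only [S9.du1]
          rw [dif_pos hj0]
          simp only [S9.dl, CE.u1.injEq, Subtype.mk.injEq, add_left_inj]
          simp [Subtype.ext_iff]
        simp only [hmz, mul_zero, add_zero, zero_add, hdu] at hz
        simp only [S9.dl, reduceCtorEq, if_false, zero_mul, mul_zero,
          Finset.sum_const_zero, add_zero, ite_mul, one_mul,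
          Finset.sum_ite_eq'] at hz
        by_cases hiT : i ∈ S9.T1 s
        · simpa [hiT] using hz
        · exact key _ z fun hmem => hiT ((S9.mem_T1 s).mpr hmem)
      | uN α i =>
        have hPdc : ∀ z', pd (CE.uN α (i + Pi.single (0 : Fin m) 1)) f z' = 0 := by
          intro z'
          refine ih _ (by simp [S9.notX]) ?_ z'
          have hss := S9.sum_add_single i (0 : Fin m)
          simp only [S9.ordC] at hord hlt ⊢
          omega
        have hmz : ∀ (d' : CE m) (z' : BCE m),
            S9.Hm s g d' (CE.uN α (i + Pi.single (0 : Fin m) 1)) z' = 0 :=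
          fun d' z' => S9.Hm_eq_zero s g f hg hfg' d' _ hPdc z'
        have hz := S9.EXPR_zero s g f hg hfg' hD (0 : Fin m)
          (CE.uN α (i + Pi.single (0 : Fin m) 1)) z
        have hdu0 : ∀ j : {i : MIdx m // i 0 = 0},
            S9.du1 (j.1 + Pi.single (0 : Fin m) 1)
              (CE.uN α (i + Pi.single (0 : Fin m) 1)) = 0 := by
          intro j
          have hj : ¬((j.1 + Pi.single (0 : Fin m) 1 : MIdx m) 0 = 0) := by simp [j.2]
          simp only [S9.du1]
          rw [dif_neg hj, neg_eq_zero]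
          refine Finset.sum_eq_zero fun β _ => ?_
          rw [S9.dl, if_neg]
          intro hEq
          rw [CE.uN.injEq] at hEq
          obtain ⟨hβ, hA⟩ := hEq
          have h0 := congrFun hA 0
          have hβ0 : ¬((0 : Fin m) = (β.1 : Fin m)) := fun h => β.2 h.symm
          simp [Function.update_apply, Pi.single_apply, j.2, hβ0] at h0
        have ht2 : (∑ β : {α : Fin m // α ≠ 0}, ∑ j ∈ S9.T2 s β,
            S9.dl (CE.uN β (j + Pi.single (0 : Fin m) 1))
                (CE.uN α (i + Pi.single (0 : Fin m) 1))
              * pd (CE.uN β j) f z)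
            = if i ∈ S9.T2 s α then pd (CE.uN α i) f z else 0 := by
          rw [Finset.sum_eq_single α]
          · simp [S9.dl, CE.uN.injEq, add_left_inj, ite_mul, Finset.sum_ite_eq']
          · intro β _ hβ
            refine Finset.sum_eq_zero fun j _ => ?_
            simp [S9.dl, CE.uN.injEq, hβ]
          · intro h; exact absurd (Finset.mem_univ α) h
        simp only [hmz, mul_zero, add_zero, zero_add, hdu0, zero_mul,
          Finset.sum_const_zero, ht2] at hz
        simp only [S9.dl, reduceCtorEq, if_false, zero_mul,
          Finset.sum_const_zero, add_zero, zero_add] at hz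
        by_cases hiT : i ∈ S9.T2 s α
        · simpa [hiT] using hz
        · exact key _ z fun hmem => hiT ((S9.mem_T2 s).mpr hmem)
      | p i =>
        have hPdc : ∀ z', pd (CE.p (i + Pi.single (0 : Fin m) 1)) f z' = 0 := by
          intro z'
          refine ih _ (by simp [S9.notX]) ?_ z'
          have hss := S9.sum_add_single i (0 : Fin m)
          simp only [S9.ordC] at hord hlt ⊢
          omega
        have hmz : ∀ (d' : CE m) (z' : BCE m),
            S9.Hm s g d' (CE.p (i + Pi.single (0 : Fin m) 1)) z' = 0 :=
          fun d' z' => S9.Hm_eq_zero s g f hg hfg' d' _ hPdc z'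
        have hz := S9.EXPR_zero s g f hg hfg' hD (0 : Fin m)
          (CE.p (i + Pi.single (0 : Fin m) 1)) z
        have hdu0 : ∀ j : {i : MIdx m // i 0 = 0},
            S9.du1 (j.1 + Pi.single (0 : Fin m) 1)
              (CE.p (i + Pi.single (0 : Fin m) 1)) = 0 := by
          intro j
          have hj : ¬((j.1 + Pi.single (0 : Fin m) 1 : MIdx m) 0 = 0) := by simp [j.2]
          simp only [S9.du1]
          rw [dif_neg hj, neg_eq_zero]
          exact Finset.sum_eq_zero fun β _ => by simp [S9.dl]
        have ht3 : (∑ j ∈ S9.T3 s,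
            S9.dl (CE.p (j + Pi.single (0 : Fin m) 1))
                (CE.p (i + Pi.single (0 : Fin m) 1)) * pd (CE.p j) f z)
            = if i ∈ S9.T3 s then pd (CE.p i) f z else 0 := by
          simp [S9.dl, CE.p.injEq, add_left_inj, ite_mul, Finset.sum_ite_eq']
        simp only [hmz, mul_zero, add_zero, zero_add, hdu0, zero_mul,
          Finset.sum_const_zero, ht3] at hz
        simp only [S9.dl, reduceCtorEq, if_false, zero_mul,
          Finset.sum_const_zero, add_zero, zero_add] at hz
        by_cases hiT : i ∈ S9.T3 s
        · simpa [hiT] using hz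
        · exact key _ z fun hmem => hiT ((S9.mem_T3 s).mpr hmem)
  have hjet : ∀ c : CE m, S9.notX c → ∀ z, pd c f z = 0 := by
    intro c hcx z
    refine claim (K + 1) c hcx (by omega) z
  have hj1 : ∀ (i : {i : MIdx m // i 0 = 0}) (z : BCE m), pd (CE.u1 i) f z = 0 :=
    fun i z => hjet _ (by simp [S9.notX]) z
  have hj2 : ∀ (α : {α : Fin m // α ≠ 0}) (i : MIdx m) (z : BCE m),
      pd (CE.uN α i) f z = 0 := fun α i z => hjet _ (by simp [S9.notX]) z
  have hj3 : ∀ (i : MIdx m) (z : BCE m), pd (CE.p i) f z = 0 :=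
    fun i z => hjet _ (by simp [S9.notX]) z
  have hx : ∀ (μ : Fin m) (z : BCE m), pd (CE.x μ) f z = 0 := by
    intro μ z
    have h := hD μ z
    rw [S9.Dsum s g f hg hfg' μ z] at h
    simpa [hj1, hj2, hj3] using h
  have hall : ∀ (c : CE m) (z : BCE m), pd c f z = 0 := by
    intro c z
    cases c with
    | x μ => exact hx μ z
    | u1 i => exact hj1 i z
    | uN α i => exact hj2 α i z
    | p i => exact hj3 i z
  have hfd : ∀ w, fderiv ℝ g w = 0 := by
    intro w
    set z : BCE m := fun c => if h : c ∈ s then w ⟨c, h⟩ else 0 with hzdef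
    have hres : S9.res s z = w := by
      funext d
      simp [S9.res, hzdef, d.2]
    ext v
    rw [ContinuousLinearMap.zero_apply]
    conv_lhs => rw [pi_eq_sum_univ v]
    rw [map_sum]
    refine Finset.sum_eq_zero fun d _ => ?_
    rw [map_smul]
    have hdr : (fun j => if d = j then (1 : ℝ) else 0) = S9.dres s d.1 := by
      funext e
      simp only [S9.dres]
      by_cases h : d = e
      · simp [h]
      · rw [if_neg h, if_neg fun hh => h (Subtype.ext hh).symm]
    rw [hdr]
    have hpe := S9.pd_eq s g f hg hfg' d.1 z
    rw [hres] at hpe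
    rw [← hpe, hall]
    simp
  refine ⟨f (fun _ => 0), fun z => ?_⟩
  rw [hfg z, hfg (fun _ => 0)]
  exact is_const_of_fderiv_eq_zero (hg.differentiable (by simp)) hfd _ _
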